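/- arXiv:2002.02360 — 4 statements merged into one kernel-verified Lean document; each statement's English description precedes it below -/
import Mathlib

section
/- Suppose the geometry-only extrusion problem is feasible. Then there are no dead ends for backward (regression) search: for every nonempty subset P ⊆ E there exists a trajectory τ ∈ T with elem τ ∈ P and Safe τ (P \ {elem τ}); that is, from every set of not-yet-deconstructed elements, at least one element can be safely removed. -/
/-- A valid safe ordering of a subset `P ⊆ E`: a list `es = [e_1, …, e_k]` enumerating `P`
without repetition, together with trajectories `ts = [τ_1, …, τ_k]` such that
`elem τ_j = e_j` and `Safe τ_j {e_1, …, e_{j-1}}` for every `j`. -/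
def ValidSafeOrdering {E T : Type*} [DecidableEq E] (elem : T → E)
    (Safe : T → Finset E → Prop) (P : Finset E) (es : List E) (ts : List T) : Prop :=
  es.Nodup ∧ es.toFinset = P ∧ ts.length = es.length ∧
    ∀ (j : ℕ) (_hj : j < es.length) (_hj' : j < ts.length),
      elem ts[j] = es[j] ∧ Safe ts[j] (es.take j).toFinset

/-- If the geometry-only extrusion problem is feasible, there are no dead ends for backward
(regression) search: from every nonempty set `P` of not-yet-deconstructed elements, at least
one element can be safely removed. -/
theorem no_dead_ends_for_regression {E T : Type*} [Fintype E] [Fintype T] [DecidableEq E]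
    (elem : T → E) (Safe : T → Finset E → Prop)
    (hanti : ∀ (τ : T) (P P' : Finset E), P ⊆ P' → Safe τ P' → Safe τ P)
    (hfeas : ∃ (es : List E) (ts : List T),
      ValidSafeOrdering elem Safe Finset.univ es ts) :
    ∀ P : Finset E, P.Nonempty → ∃ τ : T, elem τ ∈ P ∧ Safe τ (P \ {elem τ}) := by
  intro P hP
  obtain ⟨es, ts, hnd, htF, hlen, hprop⟩ := hfeas
  obtain ⟨e, heP⟩ := hP
  have hmem : ∀ x : E, x ∈ es := by
    intro x; rw [← List.mem_toFinset, htF]; exact Finset.mem_univ x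
  set S : Finset ℕ := (Finset.range es.length).filter (fun j => es.getD j e ∈ P) with hS
  have hSne : S.Nonempty := by
    obtain ⟨n, hn⟩ := List.get_of_mem (hmem e)
    refine ⟨n.1, ?_⟩
    simp only [hS, Finset.mem_filter, Finset.mem_range]
    refine ⟨n.2, ?_⟩
    rw [List.getD_eq_getElem es e n.2]
    simpa [← List.get_eq_getElem, hn] using heP
  set j := S.max' hSne with hj
  have hjS : j ∈ S := S.max'_mem hSne
  have hjlt : j < es.length := by
    have := (Finset.mem_filter.mp hjS).1
    simpa using this
  have hjlt' : j < ts.length := by rw [hlen]; exact hjlt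
  have hjP : es[j] ∈ P := by
    have := (Finset.mem_filter.mp hjS).2
    rwa [List.getD_eq_getElem es e hjlt] at this
  obtain ⟨helem, hsafe⟩ := hprop j hjlt hjlt'
  refine ⟨ts[j], by rwa [helem], ?_⟩
  refine hanti _ _ _ ?_ hsafe
  intro x hx
  rw [Finset.mem_sdiff, Finset.mem_singleton, helem] at hx
  obtain ⟨hxP, hxne⟩ := hx
  obtain ⟨i, hi⟩ := List.get_of_mem (hmem x)
  have hiS : i.1 ∈ S := by
    simp only [hS, Finset.mem_filter, Finset.mem_range]
    refine ⟨i.2, ?_⟩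
    rw [List.getD_eq_getElem es e i.2]
    simpa [← List.get_eq_getElem, hi] using hxP
  have hile : i.1 ≤ j := S.le_max' _ hiS
  have hine : i.1 ≠ j := by
    intro h
    apply hxne
    rw [← hi, List.get_eq_getElem]
    congr 1
  have hilt : i.1 < j := lt_of_le_of_ne hile hine
  rw [List.mem_toFinset]
  have : (es.take j)[i.1]'(by simp [hilt, hjlt, i.2]) = x := by
    rw [List.getElem_take]
    rw [← hi, List.get_eq_getElem]
  rw [← this]
  exact List.getElem_mem _
end

section
/- Suppose the geometry-only extrusion problem is feasible. Then feasibility is hereditary: every subset P ⊆ E admits a valid safe ordering, i.e., there is a list f_1, …, f_k enumerating P without repetition and trajectories τ_1, …, τ_k ∈ T with elem τ_j = f_j and Safe τ_j {f_1, …, f_{j-1}} for every j ∈ {1, …, k}. -/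
private lemma filter_aux {E T : Type*} [DecidableEq E] (elem : T → E)
    (Safe : T → Finset E → Prop)
    (hanti : ∀ (τ : T) (P P' : Finset E), P ⊆ P' → Safe τ P' → Safe τ P) :
    ∀ (es : List E) (ts : List T) (S : Finset E), es.Nodup → ts.length = es.length →
      (∀ (j : ℕ) (hj : j < es.length) (hj' : j < ts.length),
        elem ts[j] = es[j] ∧ Safe ts[j] (S ∪ (es.take j).toFinset)) →
      ∀ P : Finset E, ∃ (fs : List E) (ts' : List T),
        fs.Nodup ∧ fs.toFinset = P ∩ es.toFinset ∧ ts'.length = fs.length ∧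
        ∀ (j : ℕ) (hj : j < fs.length) (hj' : j < ts'.length),
          elem ts'[j] = fs[j] ∧ Safe ts'[j] (S ∪ (fs.take j).toFinset) := by
  intro es
  induction es with
  | nil =>
    intro ts S _ _ _ P
    exact ⟨[], [], List.nodup_nil, by simp, rfl, by intro j hj; simp at hj⟩
  | cons e es ih =>
    intro ts S hnd hlen hsafe P
    match ts, hlen with
    | t :: ts, hlen =>
    have hlen' : ts.length = es.length := by simpa using hlen
    have hsafe' : ∀ (j : ℕ) (hj : j < es.length) (hj' : j < ts.length),
        elem ts[j] = es[j] ∧ Safe ts[j] (insert e S ∪ (es.take j).toFinset) := by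
      intro j hj hj'
      have := hsafe (j + 1) (by simpa using hj) (by simpa using hj')
      simp only [List.getElem_cons_succ, List.take_succ_cons, List.toFinset_cons] at this
      refine ⟨this.1, ?_⟩
      have hset : insert e S ∪ (es.take j).toFinset = S ∪ insert e (es.take j).toFinset := by
        simp [Finset.insert_union, Finset.union_insert]
      rw [hset]
      exact this.2
    have henotes : e ∉ es := (List.nodup_cons.mp hnd).1
    obtain ⟨fs, ts', hfnd, hfto, hflen, hfsafe⟩ :=
      ih ts (insert e S) (List.nodup_cons.mp hnd).2 hlen' hsafe' P
    by_cases heP : e ∈ P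
    · refine ⟨e :: fs, t :: ts', ?_, ?_, by simp [hflen], ?_⟩
      · refine List.nodup_cons.mpr ⟨?_, hfnd⟩
        intro hefs
        have : e ∈ P ∩ es.toFinset := hfto ▸ List.mem_toFinset.mpr hefs
        exact henotes (List.mem_toFinset.mp (Finset.mem_inter.mp this).2)
      · simp only [List.toFinset_cons, hfto]
        rw [Finset.inter_insert_of_mem heP]
      · intro j hj hj'
        match j with
        | 0 =>
          have := hsafe 0 (by simp) (by simp)
          simpa using this
        | j + 1 =>
          have hj1 : j < fs.length := by simpa using hj
          have hj1' : j < ts'.length := by simpa using hj'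
          have := hfsafe j hj1 hj1'
          refine ⟨this.1, ?_⟩
          simp only [List.take_succ_cons, List.toFinset_cons]
          have hset : S ∪ insert e (fs.take j).toFinset
              = insert e S ∪ (fs.take j).toFinset := by
            simp [Finset.insert_union, Finset.union_insert]
          rw [hset]
          exact this.2
    · refine ⟨fs, ts', hfnd, ?_, hflen, ?_⟩
      · rw [hfto]
        simp only [List.toFinset_cons]
        rw [Finset.inter_insert_of_notMem heP]
      · intro j hj hj'
        have := hfsafe j hj hj'
        refine ⟨this.1, hanti _ _ _ ?_ this.2⟩
        exact Finset.union_subset_union (Finset.subset_insert _ _) subset_rfl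

/-- Feasibility of the geometry-only extrusion problem is hereditary: if `E` admits a valid
safe ordering, then so does every subset `P ⊆ E`. -/
theorem feasibility_hereditary {E T : Type*} [Fintype E] [Fintype T] [DecidableEq E]
    (elem : T → E) (Safe : T → Finset E → Prop)
    (hanti : ∀ (τ : T) (P P' : Finset E), P ⊆ P' → Safe τ P' → Safe τ P)
    (hfeas : ∃ (es : List E) (ts : List T),
      ValidSafeOrdering elem Safe Finset.univ es ts) :
    ∀ P : Finset E, ∃ (fs : List E) (ts' : List T),
      ValidSafeOrdering elem Safe P fs ts' := by
  obtain ⟨es, ts, hnd, hto, hlen, hsafe⟩ := hfeas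
  intro P
  have hsafe' : ∀ (j : ℕ) (hj : j < es.length) (hj' : j < ts.length),
      elem ts[j] = es[j] ∧ Safe ts[j] (∅ ∪ (es.take j).toFinset) := by
    intro j hj hj'
    simpa using hsafe j hj hj'
  obtain ⟨fs, ts', hfnd, hfto, hflen, hfsafe⟩ :=
    filter_aux elem Safe hanti es ts ∅ hnd hlen hsafe' P
  refine ⟨fs, ts', hfnd, ?_, hflen, ?_⟩
  · rw [hfto, hto]; simp
  · intro j hj hj'
    simpa using hfsafe j hj hj'
end

section
/- (Combinatorial content of Theorem 1.) Suppose the geometry-only extrusion problem is feasible. Call a 'greedy deconstruction chain' a sequence of sets E = P_0 ⊋ P_1 ⊋ ⋯ ⊋ P_k where for each j there exist f_j ∈ P_{j-1} and τ_j ∈ T with P_j = P_{j-1} \ {f_j}, elem τ_j = f_j, and Safe τ_j P_j. Then (i) every greedy deconstruction chain with P_k ≠ ∅ can be extended by one more removal; consequently every maximal greedy deconstruction chain reaches the empty set after exactly |E| removals, regardless of which safe element is removed at each step (no backtracking is ever needed); and (ii) for any maximal chain with removals f_1, …, f_m and trajectories τ_1, …, τ_m, the reversed list f_m, f_{m-1},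 …, f_1 with trajectories τ_m, …, τ_1 is a valid safe ordering of E. -/
/-- A greedy deconstruction chain `E = P_0 ⊋ P_1 ⊋ ⋯ ⊋ P_k`, recorded by the list
`fs = [f_1, …, f_k]` of removed elements (so `P_j = E \ {f_1, …, f_j}`) and the list
`ts = [τ_1, …, τ_k]` of trajectories, where `elem τ_j = f_j` and `Safe τ_j P_j`. -/
def GreedyChain {E T : Type*} [Fintype E] [DecidableEq E] (elem : T → E)
    (Safe : T → Finset E → Prop) (fs : List E) (ts : List T) : Prop :=
  fs.Nodup ∧ ts.length = fs.length ∧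
    ∀ (j : ℕ) (_hj : j < fs.length) (_hj' : j < ts.length),
      elem ts[j] = fs[j] ∧ Safe ts[j] (Finset.univ \ (fs.take (j + 1)).toFinset)

/-- Extension step: any greedy chain not yet covering `univ` can be extended. -/
theorem greedy_chain_extend {E T : Type*} [Fintype E] [Fintype T] [DecidableEq E]
    (elem : T → E) (Safe : T → Finset E → Prop)
    (hanti : ∀ (τ : T) (P P' : Finset E), P ⊆ P' → Safe τ P' → Safe τ P)
    (hfeas : ∃ (es : List E) (ts : List T),
      ValidSafeOrdering elem Safe Finset.univ es ts)
    (fs : List E) (ts : List T) (hfs : GreedyChain elem Safe fs ts)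
    (hne : fs.toFinset ≠ Finset.univ) :
    ∃ (f : E) (τ : T), GreedyChain elem Safe (fs ++ [f]) (ts ++ [τ]) := by
  obtain ⟨es, ts0, hnd, htf, hlen0, hsafe0⟩ := hfeas
  obtain ⟨hnodup, hlen, hstep⟩ := hfs
  -- there is an element outside `fs`
  obtain ⟨x, -, hx⟩ : ∃ x ∈ Finset.univ, x ∉ fs.toFinset := by
    by_contra h
    push_neg at h
    exact hne (Finset.eq_univ_iff_forall.mpr fun x => h x (Finset.mem_univ x))
  -- the set of indices of `es` whose element is outside `fs`
  set S : Finset (Fin es.length) :=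
    Finset.univ.filter (fun i : Fin es.length => es[(i : ℕ)] ∉ fs.toFinset) with hS
  have hxes : x ∈ es := by rw [← List.mem_toFinset, htf]; exact Finset.mem_univ x
  obtain ⟨ix, hix, hixx⟩ := List.mem_iff_getElem.mp hxes
  have hSne : S.Nonempty := ⟨⟨ix, hix⟩, by
    simp only [hS, Finset.mem_filter, Finset.mem_univ, true_and]
    rw [hixx]; exact hx⟩
  set j : Fin es.length := S.max' hSne with hj
  have hjS : j ∈ S := S.max'_mem hSne
  have hjfs : es[(j : ℕ)] ∉ fs.toFinset := by
    simpa [hS] using hjS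
  refine ⟨es[(j : ℕ)], ts0[(j : ℕ)]'(by omega), ?_, ?_, ?_⟩
  · -- nodup
    simp only [List.nodup_append, List.nodup_cons, List.nodup_nil, List.disjoint_singleton]
    exact ⟨hnodup, by simp, by intro a ha b hb hab; simp at hb; subst hb; subst hab; exact hjfs (List.mem_toFinset.mpr ha)⟩
  · simp [hlen]
  · -- the step condition
    intro k hk hk'
    simp only [List.length_append, List.length_singleton] at hk
    rcases lt_or_ge k fs.length with hkl | hkl
    · have h1 := hstep k hkl (by omega)
      have h2 : (fs ++ [es[(j : ℕ)]])[k] = fs[k] := by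
        rw [List.getElem_append_left hkl]
      have h3 : (ts ++ [ts0[(j : ℕ)]'(by omega)])[k] = ts[k]'(by omega) := by
        rw [List.getElem_append_left (by omega)]
      have h4 : (fs ++ [es[(j : ℕ)]]).take (k + 1) = fs.take (k + 1) :=
        List.take_append_of_le_length (by omega)
      rw [h2, h3, h4]
      exact h1
    · have hkeq : k = fs.length := by omega
      subst hkeq
      have h2 : (fs ++ [es[(j : ℕ)]])[fs.length] = es[(j : ℕ)] := by
        simp
      have h3 : (ts ++ [ts0[(j : ℕ)]'(by omega)])[fs.length] = ts0[(j : ℕ)]'(by omega) := by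
        rw [List.getElem_append_right (by omega)]
        simp [hlen]
      have h4 : (fs ++ [es[(j : ℕ)]]).take (fs.length + 1) = fs ++ [es[(j : ℕ)]] := by
        apply List.take_of_length_le
        simp
      rw [h2, h3, h4]
      constructor
      · exact (hsafe0 j (by omega) (by omega)).1
      · -- Safe: use antitonicity and maximality of j
        refine hanti _ _ _ ?_ (hsafe0 j (by omega) (by omega)).2
        intro y hy
        simp only [Finset.mem_sdiff, List.mem_toFinset, List.mem_append,
          List.mem_singleton, Finset.mem_univ, true_and, not_or] at hy
        obtain ⟨hy1, hy2⟩ := hy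
        -- y is somewhere in es
        have hyes : y ∈ es := by
          rw [← List.mem_toFinset, htf]; exact Finset.mem_univ y
        obtain ⟨iy, hiy, hiyy⟩ := List.mem_iff_getElem.mp hyes
        have hiyS : (⟨iy, hiy⟩ : Fin es.length) ∈ S := by
          simp [hS, hiyy, hy1]
        have hle : (⟨iy, hiy⟩ : Fin es.length) ≤ j := S.le_max' _ hiyS
        have hne' : iy ≠ (j : ℕ) := by
          intro h
          apply hy2
          rw [← hiyy]
          congr 1
        have hlt : iy < (j : ℕ) := lt_of_le_of_ne hle hne'
        rw [List.mem_toFinset, List.mem_take_iff_getElem]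
        exact ⟨iy, by omega, hiyy⟩

/-- Combinatorial content of Theorem 1: if the geometry-only extrusion problem is feasible,
then (i) every greedy deconstruction chain that has not yet reached the empty set can be
extended by one more removal — consequently every maximal greedy deconstruction chain reaches
the empty set after exactly `|E|` removals, no backtracking ever being needed — and (ii) the
reversal of any maximal chain is a valid safe ordering of `E`. -/
theorem greedy_deconstruction_succeeds {E T : Type*} [Fintype E] [Fintype T] [DecidableEq E]
    (elem : T → E) (Safe : T → Finset E → Prop)
    (hanti : ∀ (τ : T) (P P' : Finset E), P ⊆ P' → Safe τ P' → Safe τ P)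
    (hfeas : ∃ (es : List E) (ts : List T),
      ValidSafeOrdering elem Safe Finset.univ es ts) :
    (∀ (fs : List E) (ts : List T), GreedyChain elem Safe fs ts →
      fs.toFinset ≠ Finset.univ →
        ∃ (f : E) (τ : T), GreedyChain elem Safe (fs ++ [f]) (ts ++ [τ])) ∧
    (∀ (fs : List E) (ts : List T), GreedyChain elem Safe fs ts →
      (∀ (f : E) (τ : T), ¬ GreedyChain elem Safe (fs ++ [f]) (ts ++ [τ])) →
        fs.length = Fintype.card E ∧
          ValidSafeOrdering elem Safe Finset.univ fs.reverse ts.reverse) := by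
  constructor
  · exact fun fs ts h hne => greedy_chain_extend elem Safe hanti hfeas fs ts h hne
  · intro fs ts hchain hmax
    have huniv : fs.toFinset = Finset.univ := by
      by_contra h
      obtain ⟨f, τ, hext⟩ := greedy_chain_extend elem Safe hanti hfeas fs ts hchain h
      exact hmax f τ hext
    obtain ⟨hnodup, hlen, hstep⟩ := hchain
    have hcard : fs.length = Fintype.card E := by
      rw [← List.toFinset_card_of_nodup hnodup, huniv, Finset.card_univ]
    refine ⟨hcard, ?_, ?_, ?_, ?_⟩
    · exact List.nodup_reverse.mpr hnodup
    · simpa using huniv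
    · simp [hlen]
    · intro j hj hj'
      simp only [List.length_reverse] at hj hj'
      set i : ℕ := fs.length - 1 - j with hi
      have hil : i < fs.length := by omega
      have h1 : fs.reverse[j]'(by simpa using hj) = fs[i] := by
        rw [List.getElem_reverse]
      have h2 : ts.reverse[j]'(by simpa [hlen] using hj') = ts[i]'(by omega) := by
        rw [List.getElem_reverse]
        congr 1
        omega
      have hmain := hstep i hil (by omega)
      rw [h1, h2]
      refine ⟨hmain.1, ?_⟩
      -- identify the prefix of the reverse with the complement
      have hset : (fs.reverse.take j).toFinset
          = Finset.univ \ (fs.take (i + 1)).toFinset := by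
        have htr : fs.reverse.take j = (fs.drop (fs.length - j)).reverse :=
          List.take_reverse
        have hij : fs.length - j = i + 1 := by omega
        rw [htr, hij]
        apply Finset.ext
        intro y
        simp only [List.toFinset_reverse, List.mem_toFinset, Finset.mem_sdiff,
          Finset.mem_univ, true_and]
        constructor
        · intro hyd
          have hdisj : List.Disjoint (fs.take (i + 1)) (fs.drop (i + 1)) :=
            List.disjoint_take_drop hnodup le_rfl
          exact fun hyt => hdisj hyt hyd
        · intro hyt
          have hy : y ∈ fs := by
            rw [← List.mem_toFinset, huniv]; exact Finset.mem_univ y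
          rw [← List.take_append_drop (i + 1) fs, List.mem_append] at hy
          tauto
      rw [hset]
      exact hmain.2
end

section
/- Let ψ = [⟨n_1, n_1'⟩, …, ⟨n_m, n_m'⟩] be a directed ordering of all elements of E satisfying the grounding condition of a valid extrusion sequence: for every i, the start node n_i lies in N_{ψ_{1:i-1}}, the set of nodes spanned by the ground nodes G and the first i−1 elements. Then for every i ∈ {0, 1, …, m}, every node n ∈ N_{ψ_{1:i}} is connected to some ground node g ∈ G by a path in the subgraph of ⟨N, E⟩ whose edge set is the prefix ψ_{1:i} (where nodes of G are considered mutually connected through the ground). In particular, every partially-extruded structure arising from a valid extrusion sequence is transitively connected to ground. -/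
/-- `nodesOf G P` is `N_P`, the set of nodes spanned by the ground nodes `G` and the
(undirected) elements of `P`. -/
def nodesOf {V : Type*} (G : Finset V) (P : Finset (Sym2 V)) : Set V :=
  ↑G ∪ {n | ∃ e ∈ P, n ∈ e}

/-- The graph on the nodes whose edge set is `P`, where in addition the ground nodes `G` are
considered mutually connected through the ground. -/
def groundGraph {V : Type*} [DecidableEq V] (G : Finset V) (P : Finset (Sym2 V)) :
    SimpleGraph V where
  Adj x y := x ≠ y ∧ (s(x, y) ∈ P ∨ (x ∈ G ∧ y ∈ G))
  symm := by
    constructor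
    intro x y h
    obtain ⟨hxy, h⟩ := h
    refine ⟨hxy.symm, ?_⟩
    rcases h with h | ⟨hx, hy⟩
    · left; rwa [Sym2.eq_swap]
    · right; exact ⟨hy, hx⟩
  loopless := by constructor; intro x h; exact h.1 rfl

/-- `prefixElems ψ i` is `ψ_{1:i}`, the set of the (undirected) first `i` elements of the
directed ordering `ψ`. -/
def prefixElems {V : Type*} [DecidableEq V] (ψ : List (V × V)) (i : ℕ) : Finset (Sym2 V) :=
  ((ψ.take i).map fun p => s(p.1, p.2)).toFinset

lemma prefixElems_mono {V : Type*} [DecidableEq V] (ψ : List (V × V)) (i : ℕ) :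
    prefixElems ψ i ⊆ prefixElems ψ (i + 1) := by
  intro e he
  simp only [prefixElems, List.mem_toFinset, List.mem_map] at he ⊢
  obtain ⟨p, hp, rfl⟩ := he
  refine ⟨p, ?_, rfl⟩
  rw [List.take_succ]
  exact List.mem_append_left _ hp

lemma groundGraph_mono {V : Type*} [DecidableEq V] (G : Finset V) {P Q : Finset (Sym2 V)}
    (h : P ⊆ Q) : groundGraph G P ≤ groundGraph G Q := by
  intro x y hxy
  exact ⟨hxy.1, hxy.2.imp (fun he => h he) id⟩

/-- Along a directed ordering of all of `E` satisfying the grounding condition of a valid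
extrusion sequence (each start node lies in the node set spanned by the ground nodes and the
previously printed elements), every node of every partially-extruded structure `ψ_{1:i}` is
connected to some ground node by a path in the subgraph whose edge set is `ψ_{1:i}` (with the
ground nodes considered mutually connected through the ground). -/
theorem partial_structure_connected_to_ground {V : Type*} [DecidableEq V]
    (G : Finset V) (E : Finset (Sym2 V)) (ψ : List (V × V))
    (hnodup : (ψ.map fun p => s(p.1, p.2)).Nodup)
    (henum : (ψ.map fun p => s(p.1, p.2)).toFinset = E)
    (hground : ∀ (i : ℕ) (hi : i < ψ.length), (ψ[i]).1 ∈ nodesOf G (prefixElems ψ i)) :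
    ∀ i ≤ ψ.length, ∀ n ∈ nodesOf G (prefixElems ψ i),
      ∃ g ∈ G, (groundGraph G (prefixElems ψ i)).Reachable n g := by
  intro i
  induction i with
  | zero =>
    intro _ n hn
    rcases hn with hn | ⟨e, he, _⟩
    · exact ⟨n, hn, SimpleGraph.Reachable.refl n⟩
    · simp [prefixElems] at he
  | succ i ih =>
    intro hle n hn
    have hi : i < ψ.length := hle
    set a := (ψ[i]).1 with ha
    set b := (ψ[i]).2 with hb
    have hmem : s(a, b) ∈ prefixElems ψ (i + 1) := by
      simp only [prefixElems, List.mem_toFinset, List.mem_map]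
      refine ⟨ψ[i], ?_, rfl⟩
      rw [List.take_succ]
      refine List.mem_append_right _ ?_
      simp [List.getElem?_eq_getElem hi]
    -- lift reachability from step i to step i+1
    have lift : ∀ m ∈ nodesOf G (prefixElems ψ i),
        ∃ g ∈ G, (groundGraph G (prefixElems ψ (i + 1))).Reachable m g := by
      intro m hm
      obtain ⟨g, hg, hr⟩ := ih (le_of_lt hi) m hm
      exact ⟨g, hg, hr.mono (groundGraph_mono G (prefixElems_mono ψ i))⟩
    have hra : ∃ g ∈ G, (groundGraph G (prefixElems ψ (i + 1))).Reachable a g :=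
      lift a (hground i hi)
    have hrb : ∃ g ∈ G, (groundGraph G (prefixElems ψ (i + 1))).Reachable b g := by
      by_cases hab : b = a
      · rw [hab]; exact hra
      · obtain ⟨g, hg, hr⟩ := hra
        refine ⟨g, hg, SimpleGraph.Reachable.trans ?_ hr⟩
        refine SimpleGraph.Adj.reachable ⟨hab, Or.inl ?_⟩
        rwa [Sym2.eq_swap]
    rcases hn with hn | ⟨e, he, hne⟩
    · exact ⟨n, hn, SimpleGraph.Reachable.refl n⟩
    · -- e ∈ prefixElems ψ (i+1): either in prefixElems ψ i or e = s(a,b)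
      have : e ∈ prefixElems ψ i ∨ e = s(a, b) := by
        simp only [prefixElems, List.mem_toFinset, List.mem_map] at he
        obtain ⟨p, hp, rfl⟩ := he
        rw [List.take_succ, List.mem_append] at hp
        rcases hp with hp | hp
        · left
          simp only [prefixElems, List.mem_toFinset, List.mem_map]
          exact ⟨p, hp, rfl⟩
        · right
          simp [List.getElem?_eq_getElem hi] at hp
          rw [hp]
      rcases this with he' | rfl
      · refine lift n (Or.inr ⟨e, he', hne⟩)
      · rcases Sym2.mem_iff.mp hne with rfl | rfl
        · exact hra
        · exact hrb
end
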